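/- Maximum rule for linear dominance: a function h : X → ℝ≥0 is linearly dominated by max(f, g) (pointwise maximum) if and only if h can be written as max(f', g') for some f' linearly dominated by f and g' linearly dominated by g. -/

import Mathlib

/-!
If `h ≤ c • max f g`, then truncating `h` at `c • f` and at `c • g` splits it: by distributivity
`min h (c f) ⊔ min h (c g) = min h (c • max f g) = h`. Conversely, `f' ≤ c₁ f` and `g' ≤ c₂ g`
give `max f' g' ≤ (max c₁ c₂) • max f g`.
-/

def LinDominated {X : Type*} (h f : X → NNReal) : Prop :=
  ∃ c : NNReal, 0 < c ∧ ∀ x, h x ≤ c * f x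

namespace LinDominated

variable {X : Type*} {f g h f' g' : X → NNReal}

theorem sup (hf : LinDominated f' f) (hg : LinDominated g' g) :
    LinDominated (fun x => max (f' x) (g' x)) (fun x => max (f x) (g x)) := by
  obtain ⟨c₁, hc₁, hf⟩ := hf
  obtain ⟨c₂, hc₂, hg⟩ := hg
  refine ⟨max c₁ c₂, lt_max_of_lt_left hc₁, fun x => max_le ?_ ?_⟩
  · exact (hf x).trans (mul_le_mul' (le_max_left _ _) (le_max_left _ _))
  · exact (hg x).trans (mul_le_mul' (le_max_right _ _) (le_max_right _ _))

theorem exists_eq_max (hh : LinDominated h fun x => max (f x) (g x)) :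
    ∃ f' g', LinDominated f' f ∧ LinDominated g' g ∧ h = fun x => max (f' x) (g' x) := by
  obtain ⟨c, hc, hle⟩ := hh
  refine ⟨fun x => min (h x) (c * f x), fun x => min (h x) (c * g x),
    ⟨c, hc, fun x => min_le_right _ _⟩, ⟨c, hc, fun x => min_le_right _ _⟩, funext fun x => ?_⟩
  calc h x = min (h x) (c * max (f x) (g x)) := (min_eq_left (hle x)).symm
    _ = max (min (h x) (c * f x)) (min (h x) (c * g x)) := by
      rw [mul_max, min_max_distrib_left]

end LinDominated

theorem linDom_maximum {X : Type*} (f g h : X → NNReal) :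
    (∃ c : NNReal, 0 < c ∧ ∀ x, h x ≤ c * max (f x) (g x)) ↔
      ∃ f' g' : X → NNReal,
        (∃ c : NNReal, 0 < c ∧ ∀ x, f' x ≤ c * f x) ∧
        (∃ c : NNReal, 0 < c ∧ ∀ x, g' x ≤ c * g x) ∧
        h = fun x => max (f' x) (g' x) := by
  refine ⟨LinDominated.exists_eq_max, ?_⟩
  rintro ⟨f', g', hf, hg, rfl⟩
  exact LinDominated.sup hf hg
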